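/- arXiv:2011.10943 — 5 statements merged into one kernel-verified Lean document; each statement's English description precedes it below -/
import Mathlib

section
/- Let N, U be positive natural numbers and h ∈ ℂ^N with h ≠ 0. Then U·‖h‖² is the greatest element of the set {t : ℝ | ∃ P : Matrix (Fin N) (Fin U) ℂ, (Σ_{n,u} |P n u|² ≤ U) ∧ t = Σ_u |(Pᴴ h)_u|²}; that is, for every matrix P with squared Frobenius norm at most U one has hᴴPPᴴh = Σ_u |(Pᴴh)_u|² ≤ U·‖h‖², and this value is attained by some such P. -/
/-!
Each entry of `Pᴴh` is the inner product of a column of `P` with `h`, so by Cauchy–Schwarz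
`‖Pᴴh‖² ≤ ‖P‖_F² ‖h‖² ≤ U ‖h‖²`. Equality holds when every column of `P` is `h / ‖h‖`.
-/

open Finset Matrix

section

variable {𝕜 ι m n : Type*} [RCLike 𝕜] [Fintype ι] [Fintype m] [Fintype n]

theorem norm_star_dotProduct_sq_le (v w : ι → 𝕜) :
    ‖star v ⬝ᵥ w‖ ^ 2 ≤ (∑ i, ‖v i‖ ^ 2) * ∑ i, ‖w i‖ ^ 2 := by
  have h := norm_inner_le_norm (𝕜 := 𝕜) (WithLp.toLp 2 v) (WithLp.toLp 2 w)
  rw [EuclideanSpace.inner_toLp_toLp, dotProduct_comm] at h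
  calc ‖star v ⬝ᵥ w‖ ^ 2 ≤ (‖WithLp.toLp 2 v‖ * ‖WithLp.toLp 2 w‖) ^ 2 := by gcongr
    _ = _ := by simp only [mul_pow, EuclideanSpace.norm_sq_eq]

theorem sum_norm_conjTranspose_mulVec_sq_le (P : Matrix m n 𝕜) (h : m → 𝕜) :
    ∑ j, ‖(Pᴴ *ᵥ h) j‖ ^ 2 ≤ (∑ i, ∑ j, ‖P i j‖ ^ 2) * ∑ i, ‖h i‖ ^ 2 :=
  calc ∑ j, ‖(Pᴴ *ᵥ h) j‖ ^ 2 ≤ ∑ j, (∑ i, ‖P i j‖ ^ 2) * ∑ i, ‖h i‖ ^ 2 :=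
        sum_le_sum fun j _ => norm_star_dotProduct_sq_le (fun i => P i j) h
    _ = (∑ i, ∑ j, ‖P i j‖ ^ 2) * ∑ i, ‖h i‖ ^ 2 := by rw [← sum_mul, sum_comm]

theorem star_dotProduct_self_eq (h : ι → 𝕜) :
    star h ⬝ᵥ h = ((∑ i, ‖h i‖ ^ 2 : ℝ) : 𝕜) := by
  simp [dotProduct, RCLike.conj_mul]

theorem sum_norm_smul_replicateCol_sq (c : ℝ) (h : m → 𝕜) :
    ∑ i, ∑ j : ι, ‖(c • replicateCol ι h) i j‖ ^ 2
      = Fintype.card ι * (c ^ 2 * ∑ i, ‖h i‖ ^ 2) := by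
  simp [norm_smul, mul_pow, ← mul_sum]

theorem sum_norm_conjTranspose_smul_replicateCol_mulVec_sq (c : ℝ) (h : m → 𝕜) :
    ∑ j : ι, ‖((c • replicateCol ι h)ᴴ *ᵥ h) j‖ ^ 2
      = Fintype.card ι * (c ^ 2 * (∑ i, ‖h i‖ ^ 2) ^ 2) := by
  rw [conjTranspose_smul, conjTranspose_replicateCol, smul_mulVec, replicateRow_mulVec_eq_const,
    star_dotProduct_self_eq]
  simp only [Pi.smul_apply, Function.const_apply, norm_smul, norm_star, Real.norm_eq_abs,
    RCLike.norm_ofReal, mul_pow, sq_abs, sum_const, card_univ, nsmul_eq_mul]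

end

theorem stmt_5_general (N U : ℕ) (h : Fin N → ℂ) :
    IsGreatest {t : ℝ | ∃ P : Matrix (Fin N) (Fin U) ℂ,
        (∑ n, ∑ u, ‖P n u‖ ^ 2 ≤ (U : ℝ)) ∧
        t = ∑ u, ‖(Pᴴ *ᵥ h) u‖ ^ 2}
      ((U : ℝ) * ∑ n, ‖h n‖ ^ 2) := by
  set S := ∑ n, ‖h n‖ ^ 2
  have hc : (√S)⁻¹ ^ 2 = S⁻¹ := by rw [inv_pow, Real.sq_sqrt (by positivity)]
  -- For `h = 0` the witness is the zero matrix, as `0⁻¹ = 0`.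
  refine ⟨⟨(√S)⁻¹ • replicateCol (Fin U) h, ?_, ?_⟩, ?_⟩
  · rw [sum_norm_smul_replicateCol_sq (ι := Fin U), hc, Fintype.card_fin]
    exact mul_le_of_le_one_right (Nat.cast_nonneg _) inv_mul_le_one
  · rw [sum_norm_conjTranspose_smul_replicateCol_mulVec_sq (ι := Fin U), hc, sq, ← mul_assoc S⁻¹,
      inv_mul_mul_self, Fintype.card_fin]
  · rintro t ⟨P, hP, rfl⟩
    exact (sum_norm_conjTranspose_mulVec_sq_le P h).trans
      (mul_le_mul_of_nonneg_right hP (by positivity))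

/-- `U·‖h‖²` is the greatest value of `hᴴPPᴴh = Σ_u |(Pᴴh)_u|²` over matrices `P`
with squared Frobenius norm at most `U`. -/
theorem stmt_5 (N U : ℕ) (hN : 0 < N) (hU : 0 < U) (h : Fin N → ℂ) (hh : h ≠ 0) :
    IsGreatest {t : ℝ | ∃ P : Matrix (Fin N) (Fin U) ℂ,
        (∑ n, ∑ u, ‖P n u‖ ^ 2 ≤ (U : ℝ)) ∧
        t = ∑ u, ‖(Pᴴ *ᵥ h) u‖ ^ 2}
      ((U : ℝ) * ∑ n, ‖h n‖ ^ 2) :=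
  stmt_5_general N U h
end

section
/- Let N be a positive natural number, A : Matrix (Fin N) (Fin N) ℂ positive semidefinite, h ∈ ℂ^N, and B = A − h hᴴ, where h hᴴ is the outer product matrix with (i,j) entry h_i·conj(h_j). Suppose v, w ∈ ℂ^N, r, s ∈ ℝ satisfy B v = r·v, B w = s·w, r < 0, s < 0, and ⟨v, w⟩ = 0. Then v = 0 or w = 0. In other words, a positive semidefinite matrix minus a rank-one Hermitian term has at most one negative eigenvalue. -/
open Finset Matrix ComplexConjugate
open scoped ComplexOrder

/-!
Write `Q x = xᴴ B x`. On the span of two orthogonal eigenvectors `v`, `w` with negative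
eigenvalues, `Q` is negative definite. But `u = (hᴴ w) v - (hᴴ v) w` lies in that span and is
orthogonal to `h`, so `Q u = uᴴ A u ≥ 0`; hence `u = 0`, which forces `hᴴ v = 0` (if `w ≠ 0`),
and then `Q v = vᴴ A v ≥ 0` forces `v = 0`.
-/

namespace Matrix

variable {n 𝕜 : Type*} [Fintype n] [RCLike 𝕜]

lemma PosSemidef.dotProduct_sub_vecMulVec_mulVec_nonneg {A : Matrix n n 𝕜} (hA : A.PosSemidef)
    {h x : n → 𝕜} (hx : star h ⬝ᵥ x = 0) :
    0 ≤ star x ⬝ᵥ ((A - vecMulVec h (star h)) *ᵥ x) := by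
  rw [sub_mulVec, vecMulVec_mulVec, hx]
  simpa using hA.dotProduct_mulVec_nonneg x

variable {B : Matrix n n 𝕜} {x y : n → 𝕜} {r s : 𝕜}

lemma dotProduct_mulVec_neg_of_mulVec_eq_smul (hr : r < 0) (hx : B *ᵥ x = r • x) (hx0 : x ≠ 0) :
    star x ⬝ᵥ (B *ᵥ x) < 0 := by
  rw [hx, dotProduct_smul, smul_eq_mul]
  exact mul_neg_of_neg_of_pos hr (dotProduct_star_self_pos_iff.2 hx0)

lemma dotProduct_mulVec_add_of_mulVec_eq_smul (hx : B *ᵥ x = r • x) (hy : B *ᵥ y = s • y)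
    (hxy : star x ⬝ᵥ y = 0) :
    star (x + y) ⬝ᵥ (B *ᵥ (x + y)) = star x ⬝ᵥ (B *ᵥ x) + star y ⬝ᵥ (B *ᵥ y) := by
  have hyx : star y ⬝ᵥ x = 0 := by rw [star_dotProduct, hxy, star_zero]
  simp only [star_add, mulVec_add, add_dotProduct, dotProduct_add, hx, hy, dotProduct_smul,
    hxy, hyx, add_zero, zero_add]

lemma eq_zero_of_nonneg_dotProduct_mulVec_add (hr : r < 0) (hs : s < 0)
    (hx : B *ᵥ x = r • x) (hy : B *ᵥ y = s • y) (hxy : star x ⬝ᵥ y = 0)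
    (hQ : 0 ≤ star (x + y) ⬝ᵥ (B *ᵥ (x + y))) : x = 0 ∧ y = 0 := by
  rw [dotProduct_mulVec_add_of_mulVec_eq_smul hx hy hxy] at hQ
  have hQx : star x ⬝ᵥ (B *ᵥ x) ≤ 0 := by
    rw [hx, dotProduct_smul, smul_eq_mul]
    exact mul_nonpos_of_nonpos_of_nonneg hr.le (dotProduct_star_self_nonneg x)
  have hQy : star y ⬝ᵥ (B *ᵥ y) ≤ 0 := by
    rw [hy, dotProduct_smul, smul_eq_mul]
    exact mul_nonpos_of_nonpos_of_nonneg hs.le (dotProduct_star_self_nonneg y)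
  by_contra hxy0
  rcases not_and_or.1 hxy0 with hx0 | hy0
  · exact hQ.not_gt (add_neg_of_neg_of_nonpos
      (dotProduct_mulVec_neg_of_mulVec_eq_smul hr hx hx0) hQy)
  · exact hQ.not_gt (add_neg_of_nonpos_of_neg hQx
      (dotProduct_mulVec_neg_of_mulVec_eq_smul hs hy hy0))

end Matrix

theorem stmt_7_general (N : ℕ)
    (A : Matrix (Fin N) (Fin N) ℂ) (hA : A.PosSemidef)
    (h : Fin N → ℂ)
    (B : Matrix (Fin N) (Fin N) ℂ)
    (hB : B = A - Matrix.of (fun i j => h i * conj (h j)))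
    (v w : Fin N → ℂ) (r s : ℝ) (hr : r < 0) (hs : s < 0)
    (hv : B *ᵥ v = (r : ℂ) • v) (hw : B *ᵥ w = (s : ℂ) • w)
    (hvw : ∑ i, conj (v i) * w i = 0) :
    v = 0 ∨ w = 0 := by
  replace hB : B = A - vecMulVec h (star h) := hB
  replace hr : (r : ℂ) < 0 := by exact_mod_cast hr
  replace hs : (s : ℂ) < 0 := by exact_mod_cast hs
  subst hB
  set cv := star h ⬝ᵥ v
  set cw := star h ⬝ᵥ w
  have hu : star h ⬝ᵥ (cw • v + (-cv) • w) = 0 := by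
    rw [dotProduct_add, dotProduct_smul, dotProduct_smul, smul_eq_mul, smul_eq_mul]
    ring
  obtain ⟨-, hcvw⟩ := eq_zero_of_nonneg_dotProduct_mulVec_add hr hs
    (by rw [mulVec_smul, hv, smul_comm]) (by rw [mulVec_smul, hw, smul_comm])
    (by rw [star_smul, smul_dotProduct, dotProduct_smul, show star v ⬝ᵥ w = 0 from hvw,
      smul_zero, smul_zero])
    (hA.dotProduct_sub_vecMulVec_mulVec_nonneg hu)
  rcases smul_eq_zero.1 hcvw with hcv | hw0
  · left
    by_contra hv0
    exact (hA.dotProduct_sub_vecMulVec_mulVec_nonneg (neg_eq_zero.1 hcv)).not_gt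
      (dotProduct_mulVec_neg_of_mulVec_eq_smul hr hv hv0)
  · exact Or.inr hw0

/-- A positive semidefinite matrix minus a rank-one Hermitian term `h hᴴ` has at most one
negative eigenvalue: two orthogonal eigenvectors of `B = A − h hᴴ` with negative
eigenvalues cannot both be nonzero. -/
theorem stmt_7 (N : ℕ) (hN : 0 < N)
    (A : Matrix (Fin N) (Fin N) ℂ) (hA : A.PosSemidef)
    (h : Fin N → ℂ)
    (B : Matrix (Fin N) (Fin N) ℂ)
    (hB : B = A - Matrix.of (fun i j => h i * conj (h j)))
    (v w : Fin N → ℂ) (r s : ℝ) (hr : r < 0) (hs : s < 0)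
    (hv : B *ᵥ v = (r : ℂ) • v) (hw : B *ᵥ w = (s : ℂ) • w)
    (hvw : ∑ i, conj (v i) * w i = 0) :
    v = 0 ∨ w = 0 :=
  stmt_7_general N A hA h B hB v w r s hr hs hv hw hvw
end

section
/- Let N, m be positive natural numbers, H̃ : Matrix (Fin N) (Fin m) ℂ, h ∈ ℂ^N, and μ ≥ 0 a real number. Let R = μ·(H̃ H̃ᴴ) − h hᴴ, which is Hermitian (with a proof hR : R.IsHermitian). If there exists x ∈ ℂ^N with H̃ᴴ x = 0 and ⟨h, x⟩ ≠ 0, then R has a negative eigenvalue: there exists an index i such that hR.eigenvalues i < 0. -/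
open Matrix ComplexConjugate

/-!
On the vector `x` the term `μ H̃ H̃ᴴ` of `R` vanishes, so the quadratic form of `R` at `x` is
`-|⟨h, x⟩|² < 0`. Hence `R` is not positive semidefinite, i.e. some eigenvalue is negative.
-/

namespace Matrix

variable {n 𝕜 : Type*} [Fintype n]

theorem IsHermitian.exists_eigenvalues_neg_of_re_dotProduct_mulVec_neg [RCLike 𝕜] [DecidableEq n]
    {A : Matrix n n 𝕜} (hA : A.IsHermitian) {x : n → 𝕜}
    (hx : RCLike.re (star x ⬝ᵥ (A *ᵥ x)) < 0) : ∃ i, hA.eigenvalues i < 0 := by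
  by_contra! h
  exact hx.not_ge ((hA.posSemidef_iff_eigenvalues_nonneg.mpr h).re_dotProduct_nonneg x)

theorem star_dotProduct_vecMulVec_star_mulVec [CommRing 𝕜] [StarRing 𝕜] (h x : n → 𝕜) :
    star x ⬝ᵥ (vecMulVec h (star h) *ᵥ x) = star (star h ⬝ᵥ x) * (star h ⬝ᵥ x) := by
  rw [vecMulVec_mulVec, op_smul_eq_smul, dotProduct_smul, smul_eq_mul, mul_comm,
    ← star_dotProduct_star, star_star]

theorem star_dotProduct_mul_conjTranspose_mulVec_eq_zero [CommRing 𝕜] [StarRing 𝕜] {m : Type*}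
    [Fintype m] {B : Matrix n m 𝕜} {x : n → 𝕜} (hx : Bᴴ *ᵥ x = 0) :
    star x ⬝ᵥ ((B * Bᴴ) *ᵥ x) = 0 := by
  rw [← mulVec_mulVec, hx, mulVec_zero, dotProduct_zero]

end Matrix

theorem stmt_8_general (N m : ℕ)
    (Ht : Matrix (Fin N) (Fin m) ℂ) (h : Fin N → ℂ) (μ : ℝ)
    (R : Matrix (Fin N) (Fin N) ℂ)
    (hRdef : R = (μ : ℂ) • (Ht * Htᴴ) - Matrix.of (fun i j => h i * conj (h j)))
    (hR : R.IsHermitian)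
    (x : Fin N → ℂ) (hx1 : Htᴴ *ᵥ x = 0) (hx2 : ∑ i, conj (h i) * x i ≠ 0) :
    ∃ i, hR.eigenvalues i < 0 := by
  have hRdef' : R = (μ : ℂ) • (Ht * Htᴴ) - vecMulVec h (star h) := hRdef
  have hs : star h ⬝ᵥ x ≠ 0 := hx2
  have hquad : star x ⬝ᵥ (R *ᵥ x) = -(star (star h ⬝ᵥ x) * (star h ⬝ᵥ x)) := by
    rw [hRdef', sub_mulVec, dotProduct_sub, smul_mulVec, dotProduct_smul,
      star_dotProduct_mul_conjTranspose_mulVec_eq_zero hx1, smul_zero, zero_sub,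
      star_dotProduct_vecMulVec_star_mulVec]
  refine hR.exists_eigenvalues_neg_of_re_dotProduct_mulVec_neg (x := x) ?_
  rw [hquad, Complex.star_def, Complex.conj_mul', RCLike.re_to_complex, Complex.neg_re]
  norm_cast
  simpa using pow_pos (norm_pos_iff.mpr hs) 2

/-- If there is `x` in the nullspace of `H̃ᴴ` not orthogonal to `h`, then the Hermitian
matrix `R = μ·H̃ H̃ᴴ − h hᴴ` (with `μ ≥ 0`) has a negative eigenvalue. -/
theorem stmt_8 (N m : ℕ) (hN : 0 < N) (hm : 0 < m)
    (Ht : Matrix (Fin N) (Fin m) ℂ) (h : Fin N → ℂ) (μ : ℝ) (hμ : 0 ≤ μ)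
    (R : Matrix (Fin N) (Fin N) ℂ)
    (hRdef : R = (μ : ℂ) • (Ht * Htᴴ) - Matrix.of (fun i j => h i * conj (h j)))
    (hR : R.IsHermitian)
    (x : Fin N → ℂ) (hx1 : Htᴴ *ᵥ x = 0) (hx2 : ∑ i, conj (h i) * x i ≠ 0) :
    ∃ i, hR.eigenvalues i < 0 :=
  stmt_8_general N m Ht h μ R hRdef hR x hx1 hx2
end

section
/- (Theorem 2) Let N, U be positive natural numbers. For each u ∈ Fin U let R_u : Matrix (Fin N) (Fin N) ℂ be Hermitian and suppose each R_u has a negative eigenvalue, i.e., there exist r_u < 0 and a unit vector v_u ∈ ℂ^N with R_u v_u = r_u·v_u. Let a > 0 and ρ > 0 be real numbers and c : Fin U → ℂ^N. For P : Fin U → ℂ^N define ψ(P) = Σ_u ‖P u‖², ψ'(P) = Σ_u ‖P u − c u‖², and f(P) = Σ_u Re((P u)ᴴ R_u (P u)). Then for every P₀ satisfying the strict inequalities ψ(P₀) < a and ψ'(P₀) < ρ, there exists Q with ψ(Q) ≤ a, ψ'(Q) ≤ ρ, and f(Q) < f(P₀). Consequently the minimal value of the objective −J = f over the constraint set {P :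 ψ(P) ≤ a, ψ'(P) ≤ ρ} is achieved only on the surface of the constraint sets. -/
open Finset Matrix ComplexConjugate Topology

/-!
Moving every user's precoder along an eigenvector `v u` of `R u` with negative eigenvalue gives a
direction `W = v` with `f W < 0`. Since `f` is a quadratic form, the parallelogram law yields
`f (P₀ + s W) + f (P₀ - s W) = 2 f P₀ + 2 s² f W < 2 f P₀` for every real `s ≠ 0`, so one of the
two points decreases `f`. For `s` small both points stay in the open set of strictly feasible
precoders.
-/

section QuadForm

variable {n ι : Type*} [Fintype n] [Fintype ι]

def quadForm (A : Matrix n n ℂ) (x : n → ℂ) : ℂ :=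
  ∑ i, ∑ j, conj (x i) * A i j * x j

lemma quadForm_add_add_quadForm_sub (A : Matrix n n ℂ) (x y : n → ℂ) :
    quadForm A (x + y) + quadForm A (x - y) = 2 * quadForm A x + 2 * quadForm A y := by
  simp only [quadForm, ← Finset.sum_add_distrib, Finset.mul_sum]
  refine Finset.sum_congr rfl fun i _ => Finset.sum_congr rfl fun j _ => ?_
  simp only [Pi.add_apply, Pi.sub_apply, map_add, map_sub]
  ring

lemma quadForm_real_smul (A : Matrix n n ℂ) (s : ℝ) (x : n → ℂ) :
    quadForm A (s • x) = (s : ℂ) ^ 2 * quadForm A x := by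
  simp only [quadForm, Finset.mul_sum, Pi.smul_apply, Complex.real_smul, map_mul,
    Complex.conj_ofReal]
  refine Finset.sum_congr rfl fun i _ => Finset.sum_congr rfl fun j _ => ?_
  ring

lemma quadForm_of_mulVec_eq_smul {A : Matrix n n ℂ} {r : ℂ} {x : n → ℂ}
    (hx : A *ᵥ x = r • x) : quadForm A x = r * ∑ i, conj (x i) * x i := by
  have hrow (i : n) : ∑ j, A i j * x j = r * x i := by
    simpa [mulVec, dotProduct] using congrFun hx i
  simp only [quadForm, Finset.mul_sum]
  refine Finset.sum_congr rfl fun i _ => ?_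
  simp only [mul_assoc, ← Finset.mul_sum, hrow]
  ring

def objective (R : ι → Matrix n n ℂ) (P : ι → n → ℂ) : ℝ :=
  ∑ u, (quadForm (R u) (P u)).re

lemma objective_add_add_objective_sub (R : ι → Matrix n n ℂ) (P W : ι → n → ℂ) :
    objective R (P + W) + objective R (P - W) = 2 * objective R P + 2 * objective R W := by
  simp only [objective, ← Finset.sum_add_distrib, Finset.mul_sum]
  refine Finset.sum_congr rfl fun u _ => ?_
  have h := congrArg Complex.re (quadForm_add_add_quadForm_sub (R u) (P u) (W u))
  simpa using h

lemma objective_real_smul (R : ι → Matrix n n ℂ) (s : ℝ) (W : ι → n → ℂ) :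
    objective R (s • W) = s ^ 2 * objective R W := by
  simp only [objective, Finset.mul_sum, Pi.smul_apply, quadForm_real_smul]
  refine Finset.sum_congr rfl fun u _ => ?_
  rw [← Complex.ofReal_pow, Complex.re_ofReal_mul]

lemma objective_neg_of_eigenvectors [Nonempty ι] {R : ι → Matrix n n ℂ} {r : ι → ℝ}
    {v : ι → n → ℂ} (hr : ∀ u, r u < 0) (hv : ∀ u, R u *ᵥ v u = (r u : ℂ) • v u)
    (hv1 : ∀ u, ∑ i, conj (v u i) * v u i = 1) : objective R v < 0 := by
  have hform (u : ι) : (quadForm (R u) (v u)).re = r u := by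
    rw [quadForm_of_mulVec_eq_smul (hv u), hv1 u, mul_one, Complex.ofReal_re]
  simp only [objective, hform]
  exact Finset.sum_neg (fun u _ => hr u) Finset.univ_nonempty

lemma objective_add_smul_lt_or_sub_smul_lt (R : ι → Matrix n n ℂ) (P : ι → n → ℂ)
    {W : ι → n → ℂ} (hW : objective R W < 0) {s : ℝ} (hs : s ≠ 0) :
    objective R (P + s • W) < objective R P ∨ objective R (P - s • W) < objective R P := by
  have h := objective_add_add_objective_sub R P (s • W)
  rw [objective_real_smul] at h
  have hsW : s ^ 2 * objective R W < 0 := mul_neg_of_pos_of_neg (by positivity) hW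
  by_contra! hge
  linarith [hge.1, hge.2]

end QuadForm

lemma IsOpen.exists_ne_zero_add_smul_mem_and_sub_smul_mem {E : Type*} [AddCommGroup E]
    [TopologicalSpace E] [IsTopologicalAddGroup E] [Module ℝ E] [ContinuousSMul ℝ E]
    {S : Set E} (hS : IsOpen S) {x : E} (hx : x ∈ S) (w : E) :
    ∃ s : ℝ, s ≠ 0 ∧ x + s • w ∈ S ∧ x - s • w ∈ S := by
  have hnear (t : ℝ) : ∀ᶠ s in 𝓝 0, x + (t * s) • w ∈ S := by
    have hline : Continuous fun s : ℝ => x + (t * s) • w := by fun_prop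
    exact hline.continuousAt.preimage_mem_nhds (by simpa using hS.mem_nhds hx)
  have hpunctured :
      ∀ᶠ s in 𝓝[≠] (0 : ℝ), (x + (1 * s) • w ∈ S ∧ x + (-1 * s) • w ∈ S) ∧ s ≠ 0 :=
    (((hnear 1).and (hnear (-1))).filter_mono nhdsWithin_le_nhds).and self_mem_nhdsWithin
  obtain ⟨s, ⟨hplus, hminus⟩, hs⟩ := hpunctured.exists
  exact ⟨s, hs, by simpa using hplus, by simpa [sub_eq_add_neg] using hminus⟩

theorem stmt_11_general (N U : ℕ) (hU : 0 < U)
    (R : Fin U → Matrix (Fin N) (Fin N) ℂ)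
    (r : Fin U → ℝ) (v : Fin U → Fin N → ℂ)
    (hr : ∀ u, r u < 0)
    (hv : ∀ u, R u *ᵥ v u = (r u : ℂ) • v u)
    (hv1 : ∀ u, ∑ i, conj (v u i) * v u i = 1)
    (a ρ : ℝ) (c : Fin U → Fin N → ℂ)
    (P₀ : Fin U → Fin N → ℂ)
    (hψ : ∑ u, ∑ i, ‖P₀ u i‖ ^ 2 < a)
    (hψ' : ∑ u, ∑ i, ‖P₀ u i - c u i‖ ^ 2 < ρ) :
    ∃ Q : Fin U → Fin N → ℂ,
      (∑ u, ∑ i, ‖Q u i‖ ^ 2 ≤ a) ∧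
      (∑ u, ∑ i, ‖Q u i - c u i‖ ^ 2 ≤ ρ) ∧
      (∑ u, (∑ i, ∑ j, conj (Q u i) * R u i j * Q u j).re
        < ∑ u, (∑ i, ∑ j, conj (P₀ u i) * R u i j * P₀ u j).re) := by
  have : Nonempty (Fin U) := ⟨⟨0, hU⟩⟩
  have hS : IsOpen {P : Fin U → Fin N → ℂ |
      ∑ u, ∑ i, ‖P u i‖ ^ 2 < a ∧ ∑ u, ∑ i, ‖P u i - c u i‖ ^ 2 < ρ} :=
    (isOpen_lt (by fun_prop) continuous_const).and (isOpen_lt (by fun_prop) continuous_const)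
  obtain ⟨s, hs, hplus, hminus⟩ :=
    hS.exists_ne_zero_add_smul_mem_and_sub_smul_mem ⟨hψ, hψ'⟩ v
  rcases objective_add_smul_lt_or_sub_smul_lt R P₀
      (objective_neg_of_eigenvectors hr hv hv1) hs with hlt | hlt
  · exact ⟨_, hplus.1.le, hplus.2.le, hlt⟩
  · exact ⟨_, hminus.1.le, hminus.2.le, hlt⟩

/-- Theorem 2: if every `R_u` is Hermitian with a negative eigenvalue, then from any
strictly interior feasible point `P₀` (i.e. `ψ(P₀) < a` and `ψ'(P₀) < ρ`) the objective
`f(P) = Σ_u Re (P_uᴴ R_u P_u)` can be strictly decreased while staying feasible; hence the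
minimum of `−J = f` is achieved only on the surface of the constraint sets. -/
theorem stmt_11 (N U : ℕ) (hN : 0 < N) (hU : 0 < U)
    (R : Fin U → Matrix (Fin N) (Fin N) ℂ) (hR : ∀ u, (R u).IsHermitian)
    (r : Fin U → ℝ) (v : Fin U → Fin N → ℂ)
    (hr : ∀ u, r u < 0)
    (hv : ∀ u, R u *ᵥ v u = (r u : ℂ) • v u)
    (hv1 : ∀ u, ∑ i, conj (v u i) * v u i = 1)
    (a ρ : ℝ) (ha : 0 < a) (hρ : 0 < ρ) (c : Fin U → Fin N → ℂ)
    (P₀ : Fin U → Fin N → ℂ)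
    (hψ : ∑ u, ∑ i, ‖P₀ u i‖ ^ 2 < a)
    (hψ' : ∑ u, ∑ i, ‖P₀ u i - c u i‖ ^ 2 < ρ) :
    ∃ Q : Fin U → Fin N → ℂ,
      (∑ u, ∑ i, ‖Q u i‖ ^ 2 ≤ a) ∧
      (∑ u, ∑ i, ‖Q u i - c u i‖ ^ 2 ≤ ρ) ∧
      (∑ u, (∑ i, ∑ j, conj (Q u i) * R u i j * Q u j).re
        < ∑ u, (∑ i, ∑ j, conj (P₀ u i) * R u i j * P₀ u j).re) :=
  stmt_11_general N U hU R r v hr hv hv1 a ρ c P₀ hψ hψ'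
end

section
/- Let N be a positive natural number and R : Matrix (Fin N) (Fin N) ℂ Hermitian with a negative eigenvalue, i.e., there exist r < 0 and a unit vector v ∈ ℂ^N with R v = r·v. Let K be any subset of EuclideanSpace ℂ (Fin N) and let p₀ lie in the (metric) interior of K. Then p₀ is not a minimizer of the quadratic form on K: there exists q ∈ K with Re(qᴴ R q) < Re(p₀ᴴ R p₀). -/
/-!
The real part `Q p = Re ⟪p, T p⟫` of a sesquilinear form satisfies the parallelogram identity
`Q (p + w) + Q (p - w) = 2 Q p + 2 Q w`. Along an eigenvector `v` with eigenvalue `r < 0` we have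
`Q (s • v) = s² r < 0`, so for every `s ≠ 0` one of `p ± s • v` has a strictly smaller value than
`p`; hence `Q` has no local minimum, and in particular no minimum over `K` at an interior point.
-/

open Finset Matrix ComplexConjugate Filter Topology

section

variable {𝕜 E : Type*} [RCLike 𝕜] [NormedAddCommGroup E] [InnerProductSpace 𝕜 E]

local notation "⟪" x ", " y "⟫" => inner 𝕜 x y

theorem re_inner_map_add_add_re_inner_map_sub (T : E →ₗ[𝕜] E) (x y : E) :
    RCLike.re ⟪x + y, T (x + y)⟫ + RCLike.re ⟪x - y, T (x - y)⟫
      = 2 * RCLike.re ⟪x, T x⟫ + 2 * RCLike.re ⟪y, T y⟫ := by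
  simp only [map_add, map_sub, inner_add_left, inner_add_right, inner_sub_left, inner_sub_right]
  ring

theorem re_inner_map_ofReal_smul (T : E →ₗ[𝕜] E) (s : ℝ) (v : E) :
    RCLike.re ⟪(s : 𝕜) • v, T ((s : 𝕜) • v)⟫ = s ^ 2 * RCLike.re ⟪v, T v⟫ := by
  rw [map_smul, inner_smul_left, inner_smul_right, RCLike.conj_ofReal, ← mul_assoc, ← sq,
    ← RCLike.ofReal_pow, RCLike.re_ofReal_mul]

theorem LinearMap.not_isLocalMin_re_inner_map (T : E →ₗ[𝕜] E) (x : E) {v : E}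
    (hv : RCLike.re ⟪v, T v⟫ < 0) : ¬ IsLocalMin (fun y => RCLike.re ⟪y, T y⟫) x := by
  intro hmin
  have hplus : Tendsto (fun s : ℝ => x + (s : 𝕜) • v) (𝓝[≠] 0) (𝓝 x) := by
    have : Continuous (fun s : ℝ => x + (s : 𝕜) • v) := by fun_prop
    simpa using (this.tendsto 0).mono_left nhdsWithin_le_nhds
  have hminus : Tendsto (fun s : ℝ => x - (s : 𝕜) • v) (𝓝[≠] 0) (𝓝 x) := by
    have : Continuous (fun s : ℝ => x - (s : 𝕜) • v) := by fun_prop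
    simpa using (this.tendsto 0).mono_left nhdsWithin_le_nhds
  obtain ⟨s, ⟨hle_plus, hle_minus⟩, hs⟩ :=
    (((hplus.eventually hmin).and (hminus.eventually hmin)).and self_mem_nhdsWithin).exists
  have hsum := re_inner_map_add_add_re_inner_map_sub T x ((s : 𝕜) • v)
  rw [re_inner_map_ofReal_smul] at hsum
  have hcurv : s ^ 2 * RCLike.re ⟪v, T v⟫ < 0 := mul_neg_of_pos_of_neg (sq_pos_of_ne_zero hs) hv
  simp only at hle_plus hle_minus
  linarith

end

theorem EuclideanSpace.inner_eq_sum_conj_mul {𝕜 n : Type*} [RCLike 𝕜] [Fintype n]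
    (p q : EuclideanSpace 𝕜 n) : inner 𝕜 p q = ∑ i, conj (p i) * q i := by
  simp only [PiLp.inner_apply, RCLike.inner_apply, mul_comm]

theorem sum_sum_conj_mul_mul_eq_inner_toLpLin {𝕜 n : Type*} [RCLike 𝕜] [Fintype n]
    [DecidableEq n] (R : Matrix n n 𝕜) (q : EuclideanSpace 𝕜 n) :
    ∑ i, ∑ j, conj (q i) * R i j * q j = inner 𝕜 q (Matrix.toLpLin 2 2 R q) := by
  simp only [EuclideanSpace.inner_eq_sum_conj_mul, Matrix.toLpLin_apply, mulVec, dotProduct,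
    Finset.mul_sum, mul_assoc]

theorem stmt_16_general (N : ℕ)
    (R : Matrix (Fin N) (Fin N) ℂ)
    (r : ℝ) (hr : r < 0) (v : EuclideanSpace ℂ (Fin N))
    (hv : R *ᵥ (v : Fin N → ℂ) = (r : ℂ) • (v : Fin N → ℂ))
    (hv1 : ∑ i, conj (v i) * v i = 1)
    (K : Set (EuclideanSpace ℂ (Fin N))) (p₀ : EuclideanSpace ℂ (Fin N))
    (hp₀ : p₀ ∈ interior K) :
    ∃ q ∈ K, (∑ i, ∑ j, conj (q i) * R i j * q j).re
      < (∑ i, ∑ j, conj (p₀ i) * R i j * p₀ j).re := by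
  have heigen : Matrix.toLpLin 2 2 R v = (r : ℂ) • v := by
    rw [Matrix.toLpLin_apply, hv, WithLp.toLp_smul, WithLp.toLp_ofLp]
  have hcurv : RCLike.re (inner ℂ v (Matrix.toLpLin 2 2 R v)) < 0 := by
    rw [heigen, inner_smul_right, EuclideanSpace.inner_eq_sum_conj_mul, hv1, mul_one]
    exact hr
  by_contra! hmin
  simp only [sum_sum_conj_mul_mul_eq_inner_toLpLin] at hmin
  exact (Matrix.toLpLin 2 2 R).not_isLocalMin_re_inner_map p₀ hcurv
    (IsMinOn.isLocalMin hmin (mem_interior_iff_mem_nhds.mp hp₀))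

/-- General principle behind Theorem 2: if the Hermitian matrix `R` has a negative
eigenvalue `r` with unit eigenvector `v`, then no point in the metric interior of a
constraint set `K ⊆ EuclideanSpace ℂ (Fin N)` minimizes the quadratic form on `K`. -/
theorem stmt_16 (N : ℕ) (hN : 0 < N)
    (R : Matrix (Fin N) (Fin N) ℂ) (hR : R.IsHermitian)
    (r : ℝ) (hr : r < 0) (v : EuclideanSpace ℂ (Fin N))
    (hv : R *ᵥ (v : Fin N → ℂ) = (r : ℂ) • (v : Fin N → ℂ))
    (hv1 : ∑ i, conj (v i) * v i = 1)
    (K : Set (EuclideanSpace ℂ (Fin N))) (p₀ : EuclideanSpace ℂ (Fin N))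
    (hp₀ : p₀ ∈ interior K) :
    ∃ q ∈ K, (∑ i, ∑ j, conj (q i) * R i j * q j).re
      < (∑ i, ∑ j, conj (p₀ i) * R i j * p₀ j).re :=
  stmt_16_general N R r hr v hv hv1 K p₀ hp₀
end
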